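/- Assume d1 < x_T < d2, let x ∈ (d1,d2) and s ∈ [0,T), and suppose (d*,ν*) ∈ {d1,d2}×(s,T) minimizes (d,t) ↦ u(x,s;d,t) over {d1,d2}×(s,T) with u(x,s;d*,ν*) > 0. Then the optimal path stays in the domain before exiting: γ_{x,s;d*,ν*}(t) ∈ (d1,d2) for all t ∈ [s,ν*). -/

import Mathlib

/-- The deterministic trajectory `x⁰_{x,s}`. -/
noncomputable def traj (a0 a1 T xT x s t : ℝ) : ℝ :=
  (x + a0 / a1) * Real.sinh (a1 * (T - t)) / Real.sinh (a1 * (T - s)) +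
    (xT + a0 / a1) * Real.sinh (a1 * (t - s)) / Real.sinh (a1 * (T - s)) - a0 / a1

/-- The two-point cost `u(x,s;d,t)`. -/
noncomputable def cost (a0 a1 T xT x s d t : ℝ) : ℝ :=
  a1 * Real.sinh (a1 * (T - s)) * (d - traj a0 a1 T xT x s t) ^ 2 /
    (2 * Real.sinh (a1 * (T - t)) * Real.sinh (a1 * (t - s)))

/-- The extremal path `γ_{x,s;d,t}`. -/
noncomputable def gammaPath (a0 a1 x s d t v : ℝ) : ℝ :=
  (x + a0 / a1) * Real.sinh (a1 * (t - v)) / Real.sinh (a1 * (t - s)) +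
    (d + a0 / a1) * Real.sinh (a1 * (v - s)) / Real.sinh (a1 * (t - s)) - a0 / a1

theorem sinh_prod_id (A B C : ℝ) :
    Real.sinh B * Real.sinh (A+B+C) - Real.sinh (A+B) * Real.sinh (B+C)
      = -(Real.sinh A * Real.sinh C) := by
  simp only [Real.sinh_add, Real.cosh_add]
  linear_combination (-Real.sinh A * Real.sinh C) * Real.cosh_sq B

theorem sinh_prod_cosh (p q : ℝ) :
    Real.sinh p * Real.sinh q = (Real.cosh (p+q) - Real.cosh (p-q))/2 := by
  rw [Real.cosh_add, Real.cosh_sub]; ring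

theorem sinh_cmp (a1 α β δ : ℝ) (ha1 : a1 ≠ 0) (hα : 0 < α) (hβ : 0 < β) (hδ : 0 < δ) :
    Real.sinh (a1*α) * Real.sinh (a1*δ) < Real.sinh (a1*(β+δ)) * Real.sinh (a1*(α+β)) := by
  rw [sinh_prod_cosh, sinh_prod_cosh]
  rw [show a1*(β+δ) - a1*(α+β) = -(a1*α - a1*δ) by ring, Real.cosh_neg]
  have key : Real.cosh (a1*α + a1*δ) < Real.cosh (a1*(β+δ) + a1*(α+β)) := by
    rw [Real.cosh_lt_cosh]
    have hpa : 0 < |a1| := abs_pos.mpr ha1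
    rw [show a1*α + a1*δ = a1*(α+δ) by ring,
        show a1*(β+δ) + a1*(α+β) = a1*(α+2*β+δ) by ring, abs_mul, abs_mul]
    apply mul_lt_mul_of_pos_left _ hpa
    rw [abs_of_pos (by linarith), abs_of_pos (by linarith)]; linarith
  linarith

theorem gamma_traj_id (a0 a1 T xT x s d ν t : ℝ) (ha1 : a1 ≠ 0)
    (hTs : Real.sinh (a1*(T-s)) ≠ 0) (hνs : Real.sinh (a1*(ν-s)) ≠ 0) :
  (gammaPath a0 a1 x s d ν t - traj a0 a1 T xT x s t) * Real.sinh (a1*(ν-s))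
    = (d - traj a0 a1 T xT x s ν) * Real.sinh (a1*(t-s)) := by
  have key := sinh_prod_id (a1*(T-ν)) (a1*(ν-t)) (a1*(t-s))
  rw [show a1*(T-ν)+a1*(ν-t)+a1*(t-s) = a1*(T-s) by ring,
      show a1*(T-ν)+a1*(ν-t) = a1*(T-t) by ring,
      show a1*(ν-t)+a1*(t-s) = a1*(ν-s) by ring] at key
  unfold gammaPath traj
  field_simp
  linear_combination (x*a1 + a0) * key

theorem stmt_13 (a0 a1 T xT d1 d2 : ℝ) (ha1 : a1 ≠ 0) (hT : 0 < T)
    (h1 : d1 < xT) (h2 : xT < d2)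
    (x s : ℝ) (hx : x ∈ Set.Ioo d1 d2) (hs0 : 0 ≤ s) (hsT : s < T)
    (dstar nustar : ℝ) (hd : dstar = d1 ∨ dstar = d2) (hnu : nustar ∈ Set.Ioo s T)
    (hmin : ∀ d, (d = d1 ∨ d = d2) → ∀ t ∈ Set.Ioo s T,
      cost a0 a1 T xT x s dstar nustar ≤ cost a0 a1 T xT x s d t)
    (hpos : 0 < cost a0 a1 T xT x s dstar nustar) :
    ∀ t ∈ Set.Ico s nustar, gammaPath a0 a1 x s dstar nustar t ∈ Set.Ioo d1 d2 := by
  obtain ⟨hxd1, hxd2⟩ := hx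
  obtain ⟨hsnu, hnuT⟩ := hnu
  have hsp : ∀ r : ℝ, 0 < r → 0 < a1 * Real.sinh (a1 * r) := by
    intro r hr
    rcases lt_or_gt_of_ne ha1 with hn | hp
    · have hs : Real.sinh (a1 * r) < 0 := Real.sinh_neg_iff.mpr (by nlinarith)
      nlinarith
    · exact mul_pos hp (Real.sinh_pos_iff.mpr (by nlinarith))
  have hprod : ∀ p q : ℝ, 0 < p → 0 < q →
      0 < Real.sinh (a1*p) * Real.sinh (a1*q) := by
    intro p q hp hq
    have h2 := mul_pos (hsp p hp) (hsp q hq)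
    nlinarith [sq_nonneg a1]
  have hne : ∀ r : ℝ, 0 < r → Real.sinh (a1 * r) ≠ 0 := by
    intro r hr
    simp [Real.sinh_eq_zero, ha1, hr.ne']
  have hTs := hne (T - s) (by linarith)
  have hνs := hne (nustar - s) (by linarith)
  have hE : dstar - traj a0 a1 T xT x s nustar ≠ 0 := by
    intro h
    rw [cost, h] at hpos
    simp at hpos
  have hE2 : 0 < (dstar - traj a0 a1 T xT x s nustar)^2 := pow_two_pos_of_ne_zero hE
  -- strict inequality along the path
  have hlt : ∀ t ∈ Set.Ioo s nustar,
      cost a0 a1 T xT x s (gammaPath a0 a1 x s dstar nustar t) t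
        < cost a0 a1 T xT x s dstar nustar := by
    rintro t ⟨hst, htν⟩
    have hA := gamma_traj_id a0 a1 T xT x s dstar nustar t ha1 hTs hνs
    have hA2 : ((gammaPath a0 a1 x s dstar nustar t - traj a0 a1 T xT x s t)
        * Real.sinh (a1*(nustar-s)))^2
        = ((dstar - traj a0 a1 T xT x s nustar) * Real.sinh (a1*(t-s)))^2 := by
      rw [hA]
    have cmp := sinh_cmp a1 (t-s) (nustar-t) (T-nustar) ha1 (by linarith) (by linarith)
      (by linarith)
    rw [show t - s + (nustar - t) = nustar - s by ring,
        show nustar - t + (T - nustar) = T - t by ring] at cmp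
    have hK : 0 < a1 * Real.sinh (a1 * (T - s)) := hsp (T - s) (by linarith)
    have hP : 0 < Real.sinh (a1*(t-s)) * Real.sinh (a1*(nustar-s)) :=
      hprod (t-s) (nustar-s) (by linarith) (by linarith)
    have hC : 0 < 2 * (a1 * Real.sinh (a1*(T-s))) * (dstar - traj a0 a1 T xT x s nustar)^2
        * (Real.sinh (a1*(t-s)) * Real.sinh (a1*(nustar-s))) := by
      have := mul_pos (mul_pos hK hE2) hP
      linarith
    have hνs2 : 0 < Real.sinh (a1*(nustar-s))^2 := pow_two_pos_of_ne_zero hνs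
    have p1 : 0 < 2 * Real.sinh (a1 * (T - t)) * Real.sinh (a1 * (t - s)) := by
      have := hprod (T-t) (t-s) (by linarith) (by linarith); linarith
    have p2 : 0 < 2 * Real.sinh (a1 * (T - nustar)) * Real.sinh (a1 * (nustar - s)) := by
      have := hprod (T-nustar) (nustar-s) (by linarith) (by linarith); linarith
    rw [cost, cost, div_lt_div_iff₀ p1 p2, ← mul_lt_mul_iff_of_pos_right hνs2]
    have hmono := mul_lt_mul_of_pos_left cmp hC
    have hA3 : 2 * (a1 * Real.sinh (a1*(T-s))) * Real.sinh (a1*(T-nustar))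
          * Real.sinh (a1*(nustar-s))
          * ((gammaPath a0 a1 x s dstar nustar t - traj a0 a1 T xT x s t)
              * Real.sinh (a1*(nustar-s)))^2
        = 2 * (a1 * Real.sinh (a1*(T-s))) * Real.sinh (a1*(T-nustar))
          * Real.sinh (a1*(nustar-s))
          * ((dstar - traj a0 a1 T xT x s nustar) * Real.sinh (a1*(t-s)))^2 := by
      rw [hA2]
    nlinarith [hmono, hA3]
  -- gamma at s equals x
  have hγs : gammaPath a0 a1 x s dstar nustar s = x := by
    unfold gammaPath
    rw [show a1 * (s - s) = 0 by ring, Real.sinh_zero]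
    field_simp
    ring
  -- continuity
  have hcont : Continuous (fun v => gammaPath a0 a1 x s dstar nustar v) := by
    unfold gammaPath
    fun_prop
  -- main argument
  rintro t ⟨hst, htν⟩
  rcases hst.eq_or_lt with heq | hst'
  · rw [← heq, hγs]; exact ⟨hxd1, hxd2⟩
  constructor
  · by_contra h
    push_neg at h
    obtain ⟨t1, ht1, hft1⟩ := intermediate_value_Icc' hst'.le hcont.continuousOn
      (Set.mem_Icc.mpr ⟨h, by rw [hγs]; exact hxd1.le⟩)
    have hft1' : gammaPath a0 a1 x s dstar nustar t1 = d1 := hft1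
    have ht1s : s < t1 := by
      rcases (Set.mem_Icc.mp ht1).1.eq_or_lt with heq1 | h'
      · exfalso; rw [← heq1, hγs] at hft1'; linarith
      · exact h'
    have hlt1 := hlt t1 ⟨ht1s, lt_of_le_of_lt (Set.mem_Icc.mp ht1).2 htν⟩
    have hmin1 := hmin d1 (Or.inl rfl) t1 ⟨ht1s, by have := (Set.mem_Icc.mp ht1).2; linarith⟩
    rw [hft1'] at hlt1
    linarith
  · by_contra h
    push_neg at h
    obtain ⟨t1, ht1, hft1⟩ := intermediate_value_Icc hst'.le hcont.continuousOn
      (Set.mem_Icc.mpr ⟨by rw [hγs]; exact hxd2.le, h⟩)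
    have hft1' : gammaPath a0 a1 x s dstar nustar t1 = d2 := hft1
    have ht1s : s < t1 := by
      rcases (Set.mem_Icc.mp ht1).1.eq_or_lt with heq1 | h'
      · exfalso; rw [← heq1, hγs] at hft1'; linarith
      · exact h'
    have hlt1 := hlt t1 ⟨ht1s, lt_of_le_of_lt (Set.mem_Icc.mp ht1).2 htν⟩
    have hmin1 := hmin d2 (Or.inr rfl) t1 ⟨ht1s, by have := (Set.mem_Icc.mp ht1).2; linarith⟩
    rw [hft1'] at hlt1
    linarith
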